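/- arXiv:1711.08986 — 2 statements merged into one kernel-verified Lean document; each statement's English description precedes it below -/
import Mathlib

section
/- Let (g,s) be a signed excursion satisfying property (A). Then the strict versions of the nesting relations hold: if [a_j,c_j] ⊆ (a_i,b_i) then (s_i = ⊕ implies [a'_j,c'_j] ⊆ (a'_i,b'_i)) and (s_i = ⊖ implies [a'_j,c'_j] ⊆ (b'_i,c'_i)); if [a_j,c_j] ⊆ (b_i,c_i) then the analogous statements hold with (b'_i,c'_i) and (a'_i,b'_i) exchanged; and if [a_i,c_i] ∩ [a_j,c_j] = ∅ then [a'_i,c'_i] ∩ [a'_j,c'_j] = ∅. -/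
open MeasureTheory Set

noncomputable section

/-- `x` is not a one-sided minimum of `g`. -/
def NotOneSidedMin (g : ℝ → ℝ) (x : ℝ) : Prop :=
  x ∈ Set.Ioo (0:ℝ) 1 ∧ ∀ ε > 0, (∃ x₁ ∈ Set.Ioo (x-ε) x, g x₁ < g x) ∧
    (∃ x₂ ∈ Set.Ioo x (x+ε), g x₂ < g x)

/-- `b` is an inner local minimum of `g`. -/
def IsInnerLocalMin (g : ℝ → ℝ) (b : ℝ) : Prop :=
  b ∈ Set.Ioo (0:ℝ) 1 ∧ ∃ ε > 0, ∀ x ∈ Set.Ioo (b-ε) (b+ε), g b ≤ g x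

/-- `b` is a strict (inner) local minimum of `g`. -/
def IsStrictLocalMin (g : ℝ → ℝ) (b : ℝ) : Prop :=
  b ∈ Set.Ioo (0:ℝ) 1 ∧ ∃ ε > 0, ∀ x ∈ Set.Ioo (b-ε) (b+ε), x ≠ b → g b < g x

/-- A CRT excursion. -/
structure IsCRT (g : ℝ → ℝ) : Prop where
  cont : ContinuousOn g (Set.Icc 0 1)
  nonneg : ∀ t ∈ Set.Icc (0:ℝ) 1, 0 ≤ g t
  pos : ∀ t ∈ Set.Ioo (0:ℝ) 1, 0 < g t
  zero0 : g 0 = 0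
  zero1 : g 1 = 0
  dense_min : ∀ x ∈ Set.Icc (0:ℝ) 1, x ∈ closure {b | IsInnerLocalMin g b}
  distinct : ∀ b b', IsInnerLocalMin g b → IsInnerLocalMin g b' → g b = g b' → b = b'
  leaves_full : volume {x | NotOneSidedMin g x} = 1

/-- `β` is the unique minimum point of `g` on `[x,y]`, lies in `(x,y)`,
and is a strict local minimum: the most recent common ancestor of `x < y`. -/
def IsMrca (g : ℝ → ℝ) (β x y : ℝ) : Prop :=
  x < y ∧ β ∈ Set.Ioo x y ∧ IsStrictLocalMin g β ∧
    (∀ t ∈ Set.Icc x y, g β ≤ g t) ∧ (∀ t ∈ Set.Icc x y, g t = g β → t = β)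

/-- `x` and `y` are `g`-comparable. -/
def GComparable (g : ℝ → ℝ) (x y : ℝ) : Prop :=
  ∃ β, IsMrca g β (min x y) (max x y)

/-- `b` enumerates (injectively) the strict local minima of `g`. -/
def IsEnum (g : ℝ → ℝ) (b : ℕ → ℝ) : Prop :=
  Function.Injective b ∧ ∀ β, IsStrictLocalMin g β ↔ ∃ i, b i = β

/-- The sign-shuffled comparison relation `u ⊲ v` : if the mrca of `u,v` carries
sign `⊕` (`true`) then the smaller goes first, otherwise the bigger goes first. -/
def Tri (g : ℝ → ℝ) (b : ℕ → ℝ) (s : ℕ → Bool) (u v : ℝ) : Prop :=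
  ∃ i, (IsMrca g (b i) u v ∧ s i = true) ∨ (IsMrca g (b i) v u ∧ s i = false)

/-- The measure-preserving function `φ_{g,s}`. -/
def phi (g : ℝ → ℝ) (b : ℕ → ℝ) (s : ℕ → Bool) (t : ℝ) : ℝ :=
  (volume {u ∈ Set.Icc (0:ℝ) 1 | Tri g b s u t}).toReal

def aPt (g : ℝ → ℝ) (β : ℝ) : ℝ := sSup {t | t < β ∧ g t = g β}
def cPt (g : ℝ → ℝ) (β : ℝ) : ℝ := sInf {t | β < t ∧ g t = g β}

def aI (g : ℝ → ℝ) (b : ℕ → ℝ) (i : ℕ) : ℝ := aPt g (b i)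
def cI (g : ℝ → ℝ) (b : ℕ → ℝ) (i : ℕ) : ℝ := cPt g (b i)
def aI' (g : ℝ → ℝ) (b : ℕ → ℝ) (s : ℕ → Bool) (i : ℕ) : ℝ := phi g b s (aI g b i)
def cI' (g : ℝ → ℝ) (b : ℕ → ℝ) (s : ℕ → Bool) (i : ℕ) : ℝ :=
  aI' g b s i + (cI g b i - aI g b i)
def bI' (g : ℝ → ℝ) (b : ℕ → ℝ) (s : ℕ → Bool) (i : ℕ) : ℝ :=
  aI' g b s i + (if s i then b i - aI g b i else cI g b i - b i)

/-- The permuton `μ_{g,s} = (Id, φ_{g,s})_* Leb`. -/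
def permuton (g : ℝ → ℝ) (b : ℕ → ℝ) (s : ℕ → Bool) : Measure (ℝ × ℝ) :=
  Measure.map (fun t => (t, phi g b s t)) (volume.restrict (Set.Icc 0 1))

/-- Property (A) of a signed excursion. -/
def PropA (g : ℝ → ℝ) (b : ℕ → ℝ) (s : ℕ → Bool) : Prop :=
  ∀ i j, i ≠ j →
    Set.Icc (aI' g b s j) (cI' g b s j) ⊆ Set.Icc (aI' g b s i) (cI' g b s i) →
    (∀ y ∈ Set.Icc (g (b i)) (g (b j)),
      y ∈ closure {h | ∃ l, h = g (b l) ∧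
        Set.Icc (aI' g b s l) (cI' g b s l) ⊆ Set.Icc (aI' g b s i) (cI' g b s i) ∧
        Set.Icc (aI' g b s j) (cI' g b s j) ⊆ Set.Icc (bI' g b s l) (cI' g b s l)}) ∧
    (∀ y ∈ Set.Icc (g (b i)) (g (b j)),
      y ∈ closure {h | ∃ l, h = g (b l) ∧
        Set.Icc (aI' g b s l) (cI' g b s l) ⊆ Set.Icc (aI' g b s i) (cI' g b s i) ∧
        Set.Icc (aI' g b s j) (cI' g b s j) ⊆ Set.Icc (aI' g b s l) (bI' g b s l)})

/-- The shuffled excursion `f_{g,s}`. -/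
def fShuffle (g : ℝ → ℝ) (b : ℕ → ℝ) (s : ℕ → Bool) (t : ℝ) : ℝ :=
  ⨆ i, Set.indicator (Set.Icc (aI' g b s i) (cI' g b s i)) (fun _ => g (b i)) t

/-- Topological support of a measure. -/
def mSupport {α : Type*} [TopologicalSpace α] [MeasurableSpace α] (μ : Measure α) : Set α :=
  {x | ∀ U : Set α, IsOpen U → x ∈ U → μ U ≠ 0}

/-! The excursion intervals `[a_i, c_i]` form a laminar family: two of them are nested or
disjoint, an interval nested in `[a_i, c_i]` avoids `b_i` and so lies in one of its halves, and
two disjoint ones lie in opposite halves of a common ancestor, the minimum of `g` on the gap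
between them. For `x ∈ (a_i, c_i)` the predecessors of `x` outside `[a_i, c_i]` are exactly
those of `a_i`, so `φ(x) - φ(a_i)` is the measure of the predecessors of `x` inside `[a_i, c_i]`.
Comparing that measure with the lengths of the two halves gives the non-strict versions of all
the inclusions. Property (A) then supplies intervals `l ≠ i` whose shuffled images lie in
`[a'_i, c'_i]` with that of `j` in `[b'_l, c'_l]`, resp. `[a'_l, b'_l]`; since each of them lies
on one side of `b'_i`, every inequality becomes strict. -/

theorem measureReal_add_measureReal_le {α : Type*} [MeasurableSpace α] {μ : Measure α}
    {s t u : Set α} (hs : s ⊆ u) (ht : t ⊆ u) (hst : Disjoint s t) (htm : MeasurableSet t)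
    (hu : μ u ≠ ⊤) : μ.real s + μ.real t ≤ μ.real u := by
  rw [← measureReal_union hst htm (ne_top_of_le_ne_top hu (measure_mono hs))
    (ne_top_of_le_ne_top hu (measure_mono ht))]
  exact measureReal_mono (union_subset hs ht) hu

theorem exists_ne_of_mem_closure {X ι : Type*} [TopologicalSpace X] [T1Space X] {f : ι → X}
    {P : ι → Prop} {y : X} {i : ι} (hy : y ∈ closure {x | ∃ l, x = f l ∧ P l})
    (hne : y ≠ f i) : ∃ l, P l ∧ l ≠ i := by
  obtain ⟨_, hne', l, rfl, hl⟩ := mem_closure_iff.1 hy _ isOpen_ne hne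
  exact ⟨l, hl, fun h => hne' (h ▸ rfl)⟩

section Excursions

variable {g : ℝ → ℝ} {b : ℕ → ℝ}

theorem IsStrictLocalMin.isInnerLocalMin {β : ℝ} (h : IsStrictLocalMin g β) :
    IsInnerLocalMin g β := by
  obtain ⟨hβ, ε, hε, H⟩ := h
  refine ⟨hβ, ε, hε, fun x hx => ?_⟩
  rcases eq_or_ne x β with rfl | hne
  · exact le_rfl
  · exact (H x hx hne).le

theorem IsCRT.eq_of_isStrictLocalMin (hg : IsCRT g) {β γ : ℝ} (hβ : IsStrictLocalMin g β)
    (hγ : IsStrictLocalMin g γ) (h : g β = g γ) : β = γ :=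
  hg.distinct β γ hβ.isInnerLocalMin hγ.isInnerLocalMin h

-- A neighbour `x` of `β` at the same level would itself be an inner local minimum.
theorem IsCRT.isStrictLocalMin_of_isInnerLocalMin (hg : IsCRT g) {β : ℝ}
    (h : IsInnerLocalMin g β) : IsStrictLocalMin g β := by
  obtain ⟨⟨h0, h1⟩, ε, hε, H⟩ := h
  obtain ⟨δ, hδ, hδε, hδ0, hδ1⟩ : ∃ δ > 0, δ ≤ ε / 2 ∧ δ ≤ β ∧ δ ≤ 1 - β :=
    ⟨min (ε / 2) (min β (1 - β)), lt_min (by linarith) (lt_min h0 (by linarith)),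
      min_le_left _ _, (min_le_right _ _).trans (min_le_left _ _),
      (min_le_right _ _).trans (min_le_right _ _)⟩
  refine ⟨⟨h0, h1⟩, δ, hδ, fun x ⟨hx₁, hx₂⟩ hxβ => ?_⟩
  refine (H x ⟨by linarith, by linarith⟩).lt_of_ne fun heq => hxβ ?_
  have hx : IsInnerLocalMin g x := ⟨⟨by linarith, by linarith⟩, ε / 2, by linarith,
    fun y ⟨hy₁, hy₂⟩ => heq ▸ H y ⟨by linarith, by linarith⟩⟩
  exact hg.distinct x β hx ⟨⟨h0, h1⟩, ε, hε, H⟩ heq.symm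

theorem IsEnum.isStrictLocalMin (hb : IsEnum g b) (i : ℕ) : IsStrictLocalMin g (b i) :=
  (hb.2 (b i)).2 ⟨i, rfl⟩

theorem IsEnum.level_injective (hb : IsEnum g b) (hg : IsCRT g) :
    Function.Injective fun i => g (b i) := fun _ _ h =>
  hb.1 (hg.eq_of_isStrictLocalMin (hb.isStrictLocalMin _) (hb.isStrictLocalMin _) h)

theorem isInnerLocalMin_of_isMinOn {x y t : ℝ} (hx : 0 ≤ x) (hy : y ≤ 1)
    (hmin : IsMinOn g (Icc x y) t) (ht : t ∈ Ioo x y) : IsInnerLocalMin g t :=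
  ⟨⟨by linarith [ht.1], by linarith [ht.2]⟩, min (t - x) (y - t),
    lt_min (by linarith [ht.1]) (by linarith [ht.2]), fun z ⟨hz₁, hz₂⟩ =>
      hmin ⟨by linarith [min_le_left (t - x) (y - t)],
        by linarith [min_le_right (t - x) (y - t)]⟩⟩

structure IsExcursionInterval (g : ℝ → ℝ) (a β c : ℝ) : Prop where
  pos : 0 < a
  lt_mid : a < β
  mid_lt : β < c
  lt_one : c < 1
  left_eq : g a = g β
  right_eq : g c = g β
  lt_of_mem : ∀ t ∈ Ioo a c, t ≠ β → g β < g t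

theorem exists_lastPoint_at_level {x β ε : ℝ} (hxβ : x < β)
    (hcont : ContinuousOn g (Icc x β)) (hx : g x < g β) (hε : 0 < ε)
    (hloc : ∀ t ∈ Ioo (β - ε) β, g β < g t) :
    ∃ a ∈ Ioo x β, g a = g β ∧ ∀ t ∈ Ioo a β, g β < g t := by
  obtain ⟨y, hmax, hyβ⟩ := exists_between (max_lt hxβ (show β - ε < β by linarith))
  obtain ⟨hxy, hεy⟩ := max_lt_iff.1 hmax
  have hgy : g β < g y := hloc y ⟨hεy, hyβ⟩
  set K := Icc x y ∩ g ⁻¹' {g β}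
  have hcontK : ContinuousOn g (Icc x y) := hcont.mono (Icc_subset_Icc le_rfl hyβ.le)
  have hK : IsCompact K := isCompact_Icc.of_isClosed_subset
    (hcontK.preimage_isClosed_of_isClosed isClosed_Icc isClosed_singleton) inter_subset_left
  have hKne : K.Nonempty := by
    obtain ⟨t, ht, hgt⟩ := intermediate_value_Icc hxy.le hcontK ⟨hx.le, hgy.le⟩
    exact ⟨t, ht, hgt⟩
  obtain ⟨⟨hxa, hay⟩, hga⟩ := hK.sSup_mem hKne
  have hxa' : x < sSup K := hxa.lt_of_ne fun h => hx.ne (h ▸ hga)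
  refine ⟨sSup K, ⟨hxa', hay.trans_lt hyβ⟩, hga, fun t ⟨hat, htβ⟩ => ?_⟩
  rcases le_or_gt y t with hyt | hty
  · exact hloc t ⟨by linarith, htβ⟩
  by_contra! hgt
  obtain ⟨w, hw, hgw⟩ := intermediate_value_Icc hty.le (hcontK.mono (Icc_subset_Icc
    (hxa'.trans hat).le le_rfl)) ⟨hgt, hgy.le⟩
  have hwK : w ≤ sSup K :=
    le_csSup hK.bddAbove ⟨⟨(hxa'.trans hat).le.trans hw.1, hw.2⟩, hgw⟩
  linarith [hw.1]

theorem aPt_eq {a β : ℝ} (haβ : a < β) (hga : g a = g β)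
    (habove : ∀ t ∈ Ioo a β, g β < g t) : aPt g β = a :=
  IsGreatest.csSup_eq ⟨⟨haβ, hga⟩, fun t ⟨htβ, hgt⟩ =>
    le_of_not_gt fun hat => (habove t ⟨hat, htβ⟩).ne' hgt⟩

theorem cPt_eq {β c : ℝ} (hβc : β < c) (hgc : g c = g β)
    (habove : ∀ t ∈ Ioo β c, g β < g t) : cPt g β = c :=
  IsLeast.csInf_eq ⟨⟨hβc, hgc⟩, fun t ⟨hβt, hgt⟩ =>
    le_of_not_gt fun htc => (habove t ⟨hβt, htc⟩).ne' hgt⟩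

-- The right endpoint is the left endpoint for the reflected path `t ↦ g (-t)`.
theorem IsCRT.isExcursionInterval (hg : IsCRT g) {β : ℝ} (hβ : IsStrictLocalMin g β) :
    IsExcursionInterval g (aPt g β) β (cPt g β) := by
  obtain ⟨⟨h0, h1⟩, ε, hε, H⟩ := hβ
  have hgβ : 0 < g β := hg.pos β ⟨h0, h1⟩
  obtain ⟨a, ⟨ha0, haβ⟩, hga, hleft⟩ := exists_lastPoint_at_level h0
    (hg.cont.mono (Icc_subset_Icc le_rfl h1.le)) (by rwa [hg.zero0]) hε
    fun t ⟨ht₁, ht₂⟩ => H t ⟨ht₁, by linarith⟩ ht₂.ne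
  have hcont : ContinuousOn (fun t => g (-t)) (Icc (-1) (-β)) :=
    hg.cont.comp continuous_neg.continuousOn fun t ⟨ht₁, ht₂⟩ =>
      ⟨by linarith, by linarith⟩
  obtain ⟨c', ⟨hc'1, hc'β⟩, hgc, hright'⟩ :=
    exists_lastPoint_at_level (g := fun t => g (-t)) (by linarith : -1 < -β) hcont
      (by simpa [hg.zero1] using hgβ) hε fun t ⟨ht₁, ht₂⟩ => by
        simpa using H (-t) ⟨by linarith, by linarith⟩ (by linarith)
  simp only [neg_neg] at hgc hright'
  have hright : ∀ t ∈ Ioo β (-c'), g β < g t := fun t ⟨ht₁, ht₂⟩ => by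
    simpa using hright' (-t) ⟨by linarith, by linarith⟩
  rw [aPt_eq haβ hga hleft, cPt_eq (by linarith) hgc hright]
  refine ⟨ha0, haβ, by linarith, by linarith, hga, hgc, fun t ⟨ht₁, ht₂⟩ htβ => ?_⟩
  rcases htβ.lt_or_gt with h | h
  exacts [hleft t ⟨ht₁, h⟩, hright t ⟨h, ht₂⟩]

theorem isExcursionInterval_aI_cI (hg : IsCRT g) (hb : IsEnum g b) (i : ℕ) :
    IsExcursionInterval g (aI g b i) (b i) (cI g b i) :=
  hg.isExcursionInterval (hb.isStrictLocalMin i)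

theorem aI_lt_cI (hg : IsCRT g) (hb : IsEnum g b) (i : ℕ) : aI g b i < cI g b i :=
  (isExcursionInterval_aI_cI hg hb i).lt_mid.trans (isExcursionInterval_aI_cI hg hb i).mid_lt

theorem Icc_aI_cI_subset (hg : IsCRT g) (hb : IsEnum g b) (i : ℕ) :
    Icc (aI g b i) (cI g b i) ⊆ Icc 0 1 :=
  Icc_subset_Icc (isExcursionInterval_aI_cI hg hb i).pos.le
    (isExcursionInterval_aI_cI hg hb i).lt_one.le

end Excursions

namespace IsExcursionInterval

variable {g : ℝ → ℝ} {a β c a' β' c' : ℝ}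

theorem le_of_mem (E : IsExcursionInterval g a β c) {t : ℝ} (ht : t ∈ Icc a c) :
    g β ≤ g t := by
  rcases eq_or_ne t β with rfl | htβ
  · exact le_rfl
  rcases ht.1.eq_or_lt with rfl | hat
  · exact E.left_eq.ge
  rcases ht.2.eq_or_lt with rfl | htc
  · exact E.right_eq.ge
  exact (E.lt_of_mem t ⟨hat, htc⟩ htβ).le

theorem isStrictLocalMin (E : IsExcursionInterval g a β c) : IsStrictLocalMin g β :=
  ⟨⟨E.pos.trans E.lt_mid, E.mid_lt.trans E.lt_one⟩, min (β - a) (c - β),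
    lt_min (by linarith [E.lt_mid]) (by linarith [E.mid_lt]), fun t ⟨ht₁, ht₂⟩ htβ =>
      E.lt_of_mem t ⟨by linarith [min_le_left (β - a) (c - β)],
        by linarith [min_le_right (β - a) (c - β)]⟩ htβ⟩

theorem lt_of_subset (E : IsExcursionInterval g a β c) (E' : IsExcursionInterval g a' β' c')
    (h : Icc a' c' ⊆ Ioo a c) : g β < g β' := by
  have hβ' := h ⟨E'.lt_mid.le, E'.mid_lt.le⟩
  rcases eq_or_ne β' β with rfl | hne
  · exact ((E.lt_of_mem a' (h ⟨le_rfl, (E'.lt_mid.trans E'.mid_lt).le⟩) E'.lt_mid.ne).ne'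
      E'.left_eq).elim
  · exact E.lt_of_mem β' hβ' hne

theorem subset_Ioo_of_lt (E : IsExcursionInterval g a β c) (E' : IsExcursionInterval g a' β' c')
    (hlt : g β < g β') {t : ℝ} (ht : t ∈ Icc a c) (ht' : t ∈ Icc a' c') :
    Icc a' c' ⊆ Ioo a c := by
  have hout : ∀ x ∈ Icc a' c', g x ≠ g β := fun x hx => (hlt.trans_le (E'.le_of_mem hx)).ne'
  have ha : a < a' := lt_of_not_ge fun h =>
    hout a ⟨h, ht.1.trans ht'.2⟩ E.left_eq
  have hc : c' < c := lt_of_not_ge fun h =>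
    hout c ⟨ht'.1.trans ht.2, h⟩ E.right_eq
  exact Icc_subset_Ioo ha hc

theorem subset_Ioo_or_subset_Ioo (E : IsExcursionInterval g a β c)
    (E' : IsExcursionInterval g a' β' c') (h : Icc a' c' ⊆ Ioo a c) :
    Icc a' c' ⊆ Ioo a β ∨ Icc a' c' ⊆ Ioo β c := by
  have hβ : β ∉ Icc a' c' := fun hβ => (E.lt_of_subset E' h).not_ge (E'.le_of_mem hβ)
  rcases lt_or_ge β a' with hβa | hβa
  · exact Or.inr fun t ht => ⟨hβa.trans_le ht.1, (h ht).2⟩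
  · have hcβ : c' < β := lt_of_not_ge fun hc => hβ ⟨hβa, hc⟩
    exact Or.inl fun t ht => ⟨(h ht).1, ht.2.trans_lt hcβ⟩

-- The endpoint `c` has the level of the local minimum `β`, so it cannot be a local minimum.
theorem not_isMinOn_right (hg : IsCRT g) (E : IsExcursionInterval g a β c) {y : ℝ} (hcy : c < y)
    (hy : y ≤ 1) : ¬ IsMinOn g (Icc c y) c := by
  intro hmin
  have hmin' : IsMinOn g (Icc ((β + c) / 2) y) c := fun t ⟨ht₁, ht₂⟩ => by
    rcases le_or_gt t c with htc | htc
    · exact E.right_eq.trans_le (E.le_of_mem ⟨by linarith [E.lt_mid], htc⟩)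
    · exact hmin ⟨htc.le, ht₂⟩
  have hc := isInnerLocalMin_of_isMinOn (by linarith [E.pos, E.lt_mid, E.mid_lt]) hy hmin'
    ⟨by linarith [E.mid_lt], hcy⟩
  exact E.mid_lt.ne' (hg.distinct c β hc E.isStrictLocalMin.isInnerLocalMin E.right_eq)

theorem not_isMinOn_left (hg : IsCRT g) (E : IsExcursionInterval g a β c) {x : ℝ} (hx : 0 ≤ x)
    (hxa : x < a) : ¬ IsMinOn g (Icc x a) a := by
  intro hmin
  have hmin' : IsMinOn g (Icc x ((a + β) / 2)) a := fun t ⟨ht₁, ht₂⟩ => by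
    rcases le_or_gt t a with hta | hta
    · exact hmin ⟨ht₁, hta⟩
    · exact E.left_eq.trans_le (E.le_of_mem ⟨hta.le, by linarith [E.mid_lt]⟩)
  have ha := isInnerLocalMin_of_isMinOn hx (by linarith [E.lt_one, E.mid_lt, E.lt_mid]) hmin'
    ⟨hxa, by linarith [E.lt_mid]⟩
  exact E.lt_mid.ne (hg.distinct a β ha E.isStrictLocalMin.isInnerLocalMin E.left_eq)

theorem isInnerLocalMin_of_isMinOn_gap (hg : IsCRT g) (E : IsExcursionInterval g a β c)
    (E' : IsExcursionInterval g a' β' c') (hca' : c < a') {t : ℝ}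
    (hmin : IsMinOn g (Icc c a') t) (ht : t ∈ Icc c a') :
    t ∈ Ioo c a' ∧ IsInnerLocalMin g t := by
  have hc0 : 0 ≤ c := by linarith [E.pos, E.lt_mid, E.mid_lt]
  have ha'1 : a' ≤ 1 := by linarith [E'.lt_mid, E'.mid_lt, E'.lt_one]
  have hc : t ≠ c := by rintro rfl; exact E.not_isMinOn_right hg hca' ha'1 hmin
  have ha' : t ≠ a' := by rintro rfl; exact E'.not_isMinOn_left hg hc0 hca' hmin
  have ht' : t ∈ Ioo c a' := ⟨ht.1.lt_of_ne hc.symm, ht.2.lt_of_ne ha'⟩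
  exact ⟨ht', isInnerLocalMin_of_isMinOn hc0 ha'1 hmin ht'⟩

end IsExcursionInterval

section Mrca

variable {g : ℝ → ℝ} {b : ℕ → ℝ} {s : ℕ → Bool} {γ γ' x y x' y' : ℝ}

theorem IsMrca.mono (h : IsMrca g γ x' y') (hx : x' ≤ x) (hy : y ≤ y') (hγ : γ ∈ Ioo x y) :
    IsMrca g γ x y :=
  ⟨hγ.1.trans hγ.2, hγ, h.2.2.1, fun t ht => h.2.2.2.1 t ⟨hx.trans ht.1, ht.2.trans hy⟩,
    fun t ht => h.2.2.2.2 t ⟨hx.trans ht.1, ht.2.trans hy⟩⟩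

theorem IsMrca.extend (h : IsMrca g γ x y) (hx : x' ≤ x) (hy : y ≤ y')
    (hout : ∀ t ∈ Icc x' y', t ∉ Icc x y → g γ < g t) : IsMrca g γ x' y' := by
  obtain ⟨hxy, ⟨hxγ, hγy⟩, hloc, hmin, huniq⟩ := h
  refine ⟨by linarith, ⟨by linarith, by linarith⟩, hloc, fun t ht => ?_, fun t ht hgt => ?_⟩
  · by_cases htxy : t ∈ Icc x y
    exacts [hmin t htxy, (hout t ht htxy).le]
  · by_cases htxy : t ∈ Icc x y
    exacts [huniq t htxy hgt, absurd hgt (hout t ht htxy).ne']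

theorem IsMrca.eq (h : IsMrca g γ x y) (h' : IsMrca g γ' x y) : γ = γ' :=
  (h'.2.2.2.2 γ ⟨h.2.1.1.le, h.2.1.2.le⟩
    (le_antisymm (h.2.2.2.1 γ' ⟨h'.2.1.1.le, h'.2.1.2.le⟩)
      (h'.2.2.2.1 γ ⟨h.2.1.1.le, h.2.1.2.le⟩)))

theorem tri_asymm (hb : Function.Injective b) {u v : ℝ} (h : Tri g b s u v) :
    ¬ Tri g b s v u := by
  rintro ⟨k, ⟨hk, hsk⟩ | ⟨hk, hsk⟩⟩ <;>
    obtain ⟨i, ⟨hi, hsi⟩ | ⟨hi, hsi⟩⟩ := h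
  · exact absurd (hi.1.trans hk.1) (lt_irrefl u)
  · simp [hb (hi.eq hk), hsk] at hsi
  · simp [hb (hi.eq hk), hsk] at hsi
  · exact absurd (hi.1.trans hk.1) (lt_irrefl v)

-- Local minima have distinct levels, so the minimum `γ` cannot sit at the level of `β`.
theorem IsCRT.level_lt_of_isMrca (hg : IsCRT g) {β t : ℝ} (hβ : IsStrictLocalMin g β)
    (h : IsMrca g γ x y) (ht : t ∈ Icc x y) (hgt : g t = g β) (htβ : t ≠ β) :
    g γ < g β := by
  refine (hgt ▸ h.2.2.2.1 t ht).lt_of_ne fun heq => htβ ?_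
  rw [h.2.2.2.2 t ht (hgt.trans heq.symm)]
  exact hg.eq_of_isStrictLocalMin h.2.2.1 hβ heq

end Mrca

namespace IsExcursionInterval

variable {g : ℝ → ℝ} {b : ℕ → ℝ} {s : ℕ → Bool} {a β c γ u v x : ℝ}

theorem isMrca (E : IsExcursionInterval g a β c) (hu : u ∈ Ioo a β) (hv : v ∈ Ioo β c) :
    IsMrca g β u v := by
  refine ⟨hu.2.trans hv.1, ⟨hu.2, hv.1⟩, E.isStrictLocalMin,
    fun t ht => E.le_of_mem ⟨hu.1.le.trans ht.1, ht.2.trans hv.2.le⟩, fun t ht hgt => ?_⟩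
  by_contra htβ
  exact (E.lt_of_mem t ⟨hu.1.trans_le ht.1, ht.2.trans_lt hv.2⟩ htβ).ne' hgt

theorem not_isMrca_left (E : IsExcursionInterval g a β c) (hu : u ∈ Icc a c) :
    ¬ IsMrca g γ a u := fun h =>
  h.2.1.1.ne (h.2.2.2.2 a ⟨le_rfl, h.1.le⟩ (le_antisymm
    (E.left_eq ▸ E.le_of_mem ⟨h.2.1.1.le, h.2.1.2.le.trans hu.2⟩)
    (h.2.2.2.1 a ⟨le_rfl, h.1.le⟩)))

theorem isMrca_iff_of_not_mem (hg : IsCRT g) (E : IsExcursionInterval g a β c)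
    (hx : x ∈ Ioo a c) (hu : u ∉ Icc a c) :
    (IsMrca g γ u a ↔ IsMrca g γ u x) ∧ (IsMrca g γ a u ↔ IsMrca g γ x u) := by
  have hβ := E.isStrictLocalMin
  have hout : ∀ t ∈ Icc a c, g γ < g β → g γ < g t := fun t ht hγ =>
    hγ.trans_le (E.le_of_mem ht)
  rw [mem_Icc, not_and_or, not_le, not_le] at hu
  rcases hu with hua | hcu
  · refine ⟨⟨fun h => ?_, fun h => ?_⟩, iff_of_false (fun h => ?_) (fun h => ?_)⟩
    · have hγ := hg.level_lt_of_isMrca hβ h ⟨hua.le, le_rfl⟩ E.left_eq E.lt_mid.ne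
      exact h.extend le_rfl hx.1.le fun t ht htn =>
        hout t ⟨le_of_not_gt fun hta => htn ⟨ht.1, hta.le⟩, ht.2.trans hx.2.le⟩ hγ
    · have hγ := hg.level_lt_of_isMrca hβ h ⟨hua.le, hx.1.le⟩ E.left_eq E.lt_mid.ne
      have hγa : γ < a := lt_of_not_ge fun haγ =>
        (hout γ ⟨haγ, h.2.1.2.le.trans hx.2.le⟩ hγ).false
      exact h.mono le_rfl hx.1.le ⟨h.2.1.1, hγa⟩
    · exact (h.1.trans hua).false
    · exact (h.1.trans (hua.trans hx.1)).false
  · refine ⟨iff_of_false (fun h => ?_) (fun h => ?_), ⟨fun h => ?_, fun h => ?_⟩⟩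
    · exact (h.1.trans (E.lt_mid.trans (E.mid_lt.trans hcu))).false
    · exact (h.1.trans (hx.2.trans hcu)).false
    · have hγ := hg.level_lt_of_isMrca hβ h ⟨le_rfl, h.1.le⟩ E.left_eq E.lt_mid.ne
      have hcγ : c < γ := lt_of_not_ge fun hγc => (hout γ ⟨h.2.1.1.le, hγc⟩ hγ).false
      exact h.mono hx.1.le le_rfl ⟨hx.2.trans hcγ, h.2.1.2⟩
    · have hγ := hg.level_lt_of_isMrca hβ h ⟨hx.2.le, hcu.le⟩ E.right_eq E.mid_lt.ne'
      exact h.extend hx.1.le le_rfl fun t ht htn =>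
        hout t ⟨ht.1, (le_of_not_gt fun hxt => htn ⟨hxt.le, ht.2⟩).trans hx.2.le⟩ hγ

theorem tri_iff_of_not_mem (hg : IsCRT g) (E : IsExcursionInterval g a β c) (hx : x ∈ Ioo a c)
    (hu : u ∉ Icc a c) : Tri g b s u a ↔ Tri g b s u x := by
  simp only [Tri, (E.isMrca_iff_of_not_mem hg hx hu).1, (E.isMrca_iff_of_not_mem hg hx hu).2]

theorem not_tri_left (E : IsExcursionInterval g a β c) (hu : u ∈ Icc a c) :
    ¬ Tri g b s u a := by
  rintro ⟨l, ⟨h, -⟩ | ⟨h, -⟩⟩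
  exacts [h.1.not_ge hu.1, E.not_isMrca_left hu h]

end IsExcursionInterval

-- The sign `s i` decides which half of `[a_i, c_i]` is placed first by the shuffle.
def firstHalf (g : ℝ → ℝ) (b : ℕ → ℝ) (s : ℕ → Bool) (i : ℕ) : Set ℝ :=
  if s i then Ioo (aI g b i) (b i) else Ioo (b i) (cI g b i)

def secondHalf (g : ℝ → ℝ) (b : ℕ → ℝ) (s : ℕ → Bool) (i : ℕ) : Set ℝ :=
  if s i then Ioo (b i) (cI g b i) else Ioo (aI g b i) (b i)

def predecessors (g : ℝ → ℝ) (b : ℕ → ℝ) (s : ℕ → Bool) (t : ℝ) : Set ℝ :=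
  {u ∈ Icc (0 : ℝ) 1 | Tri g b s u t}

section Shuffle

variable {g : ℝ → ℝ} {b : ℕ → ℝ} {s : ℕ → Bool} {i : ℕ}

theorem firstHalf_subset (hg : IsCRT g) (hb : IsEnum g b) :
    firstHalf g b s i ⊆ Ioo (aI g b i) (cI g b i) := by
  have E := isExcursionInterval_aI_cI hg hb i
  unfold firstHalf
  split_ifs
  exacts [Ioo_subset_Ioo_right E.mid_lt.le, Ioo_subset_Ioo_left E.lt_mid.le]

theorem secondHalf_subset (hg : IsCRT g) (hb : IsEnum g b) :
    secondHalf g b s i ⊆ Ioo (aI g b i) (cI g b i) := by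
  have E := isExcursionInterval_aI_cI hg hb i
  unfold secondHalf
  split_ifs
  exacts [Ioo_subset_Ioo_left E.lt_mid.le, Ioo_subset_Ioo_right E.mid_lt.le]

theorem disjoint_firstHalf_secondHalf : Disjoint (firstHalf g b s i) (secondHalf g b s i) := by
  unfold firstHalf secondHalf
  split_ifs
  exacts [disjoint_left.2 fun _ h h' => lt_asymm h.2 h'.1,
    disjoint_left.2 fun _ h h' => lt_asymm h.1 h'.2]

theorem tri_of_mem_firstHalf (hg : IsCRT g) (hb : IsEnum g b) {u v : ℝ}
    (hu : u ∈ firstHalf g b s i) (hv : v ∈ secondHalf g b s i) : Tri g b s u v := by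
  have E := isExcursionInterval_aI_cI hg hb i
  unfold firstHalf at hu
  unfold secondHalf at hv
  split_ifs at hu hv with hs
  · exact ⟨i, Or.inl ⟨E.isMrca hu hv, hs⟩⟩
  · exact ⟨i, Or.inr ⟨E.isMrca hv hu, by simpa using hs⟩⟩

theorem phi_eq_volume_real (t : ℝ) : phi g b s t = volume.real (predecessors g b s t) := rfl

theorem volume_predecessors_ne_top (t : ℝ) : volume (predecessors g b s t) ≠ ⊤ :=
  ne_top_of_le_ne_top measure_Icc_lt_top.ne (measure_mono fun _ hu => hu.1)

theorem volume_real_firstHalf_add_secondHalf (hg : IsCRT g) (hb : IsEnum g b) :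
    volume.real (firstHalf g b s i) + volume.real (secondHalf g b s i) = cI g b i - aI g b i := by
  have E := isExcursionInterval_aI_cI hg hb i
  unfold firstHalf secondHalf
  split_ifs <;>
  · rw [Real.volume_real_Ioo_of_le E.lt_mid.le, Real.volume_real_Ioo_of_le E.mid_lt.le]; ring

theorem bI'_eq (hg : IsCRT g) (hb : IsEnum g b) :
    bI' g b s i = aI' g b s i + volume.real (firstHalf g b s i) := by
  have E := isExcursionInterval_aI_cI hg hb i
  unfold bI' firstHalf
  split_ifs
  · rw [Real.volume_real_Ioo_of_le E.lt_mid.le]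
  · rw [Real.volume_real_Ioo_of_le E.mid_lt.le]

theorem aI'_lt_bI' (hg : IsCRT g) (hb : IsEnum g b) : aI' g b s i < bI' g b s i := by
  have E := isExcursionInterval_aI_cI hg hb i
  unfold bI'
  split_ifs
  · linarith [E.lt_mid]
  · linarith [E.mid_lt]

theorem bI'_lt_cI' (hg : IsCRT g) (hb : IsEnum g b) : bI' g b s i < cI' g b s i := by
  have E := isExcursionInterval_aI_cI hg hb i
  unfold bI' cI'
  split_ifs
  · linarith [E.mid_lt]
  · linarith [E.lt_mid]

-- `a_i` has no predecessors in `[a_i, c_i]`.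
theorem predecessors_diff_Icc (hg : IsCRT g) (hb : IsEnum g b) {x : ℝ}
    (hx : x ∈ Ioo (aI g b i) (cI g b i)) :
    predecessors g b s x \ Icc (aI g b i) (cI g b i) = predecessors g b s (aI g b i) := by
  have E := isExcursionInterval_aI_cI hg hb i
  ext u
  constructor
  · rintro ⟨⟨hu, htri⟩, hout⟩
    exact ⟨hu, (E.tri_iff_of_not_mem hg hx hout).2 htri⟩
  · rintro ⟨hu, htri⟩
    have hout : u ∉ Icc (aI g b i) (cI g b i) := fun hin => E.not_tri_left hin htri
    exact ⟨⟨hu, (E.tri_iff_of_not_mem hg hx hout).1 htri⟩, hout⟩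

theorem phi_eq_add (hg : IsCRT g) (hb : IsEnum g b) {x : ℝ}
    (hx : x ∈ Ioo (aI g b i) (cI g b i)) :
    phi g b s x = phi g b s (aI g b i) +
      volume.real (predecessors g b s x ∩ Icc (aI g b i) (cI g b i)) := by
  rw [phi_eq_volume_real, phi_eq_volume_real, ← predecessors_diff_Icc hg hb hx]
  exact (measureReal_sdiff_add_inter measurableSet_Icc (volume_predecessors_ne_top x)).symm

end Shuffle

section Nesting

variable {g : ℝ → ℝ} {b : ℕ → ℝ} {s : ℕ → Bool} {i j : ℕ}

theorem measurableSet_secondHalf : MeasurableSet (secondHalf g b s i) := by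
  unfold secondHalf
  split_ifs <;> exact measurableSet_Ioo

theorem aI'_eq_add (hg : IsCRT g) (hb : IsEnum g b)
    (h : Icc (aI g b j) (cI g b j) ⊆ Ioo (aI g b i) (cI g b i)) :
    aI' g b s j = aI' g b s i +
      volume.real (predecessors g b s (aI g b j) ∩ Icc (aI g b i) (cI g b i)) :=
  phi_eq_add hg hb (h ⟨le_rfl, (aI_lt_cI hg hb j).le⟩)

theorem disjoint_predecessors_Ioo (hg : IsCRT g) (hb : IsEnum g b) (i j : ℕ) :
    Disjoint (predecessors g b s (aI g b j) ∩ Icc (aI g b i) (cI g b i))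
      (Ioo (aI g b j) (cI g b j)) :=
  disjoint_left.2 fun _ hu hu' =>
    (isExcursionInterval_aI_cI hg hb j).not_tri_left (Ioo_subset_Icc_self hu') hu.1.2

theorem shuffled_le_of_subset_firstHalf (hg : IsCRT g) (hb : IsEnum g b)
    (h : Icc (aI g b j) (cI g b j) ⊆ firstHalf g b s i) :
    aI' g b s i ≤ aI' g b s j ∧ cI' g b s j ≤ bI' g b s i := by
  have hnest := h.trans (firstHalf_subset hg hb)
  have hj := aI_lt_cI hg hb j
  have hdisj : Disjoint (predecessors g b s (aI g b j) ∩ Icc (aI g b i) (cI g b i))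
      (Ioo (aI g b j) (cI g b j) ∪ secondHalf g b s i) :=
    disjoint_union_right.2 ⟨disjoint_predecessors_Ioo hg hb i j, disjoint_left.2 fun _ hu hu' =>
      tri_asymm hb.1 (tri_of_mem_firstHalf hg hb (h ⟨le_rfl, hj.le⟩) hu') hu.1.2⟩
  have hIoo : Ioo (aI g b j) (cI g b j) ⊆ Icc (aI g b i) (cI g b i) :=
    Ioo_subset_Icc_self.trans (hnest.trans Ioo_subset_Icc_self)
  have hsec : secondHalf g b s i ⊆ Icc (aI g b i) (cI g b i) :=
    (secondHalf_subset hg hb).trans Ioo_subset_Icc_self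
  have hvol : volume.real (Ioo (aI g b j) (cI g b j) ∪ secondHalf g b s i) =
      (cI g b j - aI g b j) + volume.real (secondHalf g b s i) := by
    rw [measureReal_union ((disjoint_firstHalf_secondHalf).mono_left
      (Ioo_subset_Icc_self.trans h)) measurableSet_secondHalf
      ((measure_mono hIoo).trans_lt measure_Icc_lt_top).ne
      ((measure_mono hsec).trans_lt measure_Icc_lt_top).ne, Real.volume_real_Ioo_of_le hj.le]
  have hle := measureReal_add_measureReal_le (μ := volume) inter_subset_right
    (union_subset hIoo hsec) hdisj (measurableSet_Ioo.union measurableSet_secondHalf)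
    measure_Icc_lt_top.ne
  rw [hvol, Real.volume_real_Icc_of_le (aI_lt_cI hg hb i).le] at hle
  have hsum := volume_real_firstHalf_add_secondHalf (s := s) hg hb (i := i)
  rw [aI'_eq_add hg hb hnest, bI'_eq hg hb]
  unfold cI'
  rw [aI'_eq_add hg hb hnest]
  constructor <;> linarith [measureReal_nonneg (μ := volume)
    (s := predecessors g b s (aI g b j) ∩ Icc (aI g b i) (cI g b i))]

theorem shuffled_le_of_subset_secondHalf (hg : IsCRT g) (hb : IsEnum g b)
    (h : Icc (aI g b j) (cI g b j) ⊆ secondHalf g b s i) :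
    bI' g b s i ≤ aI' g b s j ∧ cI' g b s j ≤ cI' g b s i := by
  have hnest := h.trans (secondHalf_subset hg hb)
  have hj := aI_lt_cI hg hb j
  have hfirst : firstHalf g b s i ⊆
      predecessors g b s (aI g b j) ∩ Icc (aI g b i) (cI g b i) := fun u hu =>
    have hu' := Ioo_subset_Icc_self (firstHalf_subset hg hb hu)
    ⟨⟨Icc_aI_cI_subset hg hb i hu', tri_of_mem_firstHalf hg hb hu (h ⟨le_rfl, hj.le⟩)⟩,
      hu'⟩
  have hge := measureReal_mono hfirst
    (ne_top_of_le_ne_top (volume_predecessors_ne_top _) (measure_mono inter_subset_left))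
  have hle := measureReal_add_measureReal_le (μ := volume) inter_subset_right
    (Ioo_subset_Icc_self.trans (hnest.trans Ioo_subset_Icc_self))
    (disjoint_predecessors_Ioo (s := s) hg hb i j) measurableSet_Ioo measure_Icc_lt_top.ne
  rw [Real.volume_real_Ioo_of_le hj.le, Real.volume_real_Icc_of_le (aI_lt_cI hg hb i).le] at hle
  rw [bI'_eq hg hb]
  unfold cI'
  rw [aI'_eq_add hg hb hnest]
  constructor <;> linarith

end Nesting

section Tree

variable {g : ℝ → ℝ} {b : ℕ → ℝ} {s : ℕ → Bool} {i j : ℕ}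

theorem subset_firstHalf_or_secondHalf (hg : IsCRT g) (hb : IsEnum g b)
    (h : Icc (aI g b j) (cI g b j) ⊆ Ioo (aI g b i) (cI g b i)) :
    Icc (aI g b j) (cI g b j) ⊆ firstHalf g b s i ∨
      Icc (aI g b j) (cI g b j) ⊆ secondHalf g b s i := by
  unfold firstHalf secondHalf
  rcases (isExcursionInterval_aI_cI hg hb i).subset_Ioo_or_subset_Ioo
    (isExcursionInterval_aI_cI hg hb j) h with h' | h' <;> split_ifs <;> simp [h']

theorem shuffled_le_of_subset (hg : IsCRT g) (hb : IsEnum g b)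
    (h : Icc (aI g b j) (cI g b j) ⊆ Ioo (aI g b i) (cI g b i)) :
    aI' g b s i ≤ aI' g b s j ∧ cI' g b s j ≤ cI' g b s i ∧
      (cI' g b s j ≤ bI' g b s i ∨ bI' g b s i ≤ aI' g b s j) := by
  have hi := bI'_lt_cI' (s := s) hg hb (i := i)
  have hj := aI'_lt_bI' (s := s) hg hb (i := j)
  have hj' := bI'_lt_cI' (s := s) hg hb (i := j)
  rcases subset_firstHalf_or_secondHalf (s := s) hg hb h with h' | h'
  · obtain ⟨ha, hc⟩ := shuffled_le_of_subset_firstHalf hg hb h'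
    exact ⟨ha, by linarith, Or.inl hc⟩
  · obtain ⟨ha, hc⟩ := shuffled_le_of_subset_secondHalf hg hb h'
    exact ⟨by linarith [aI'_lt_bI' (s := s) hg hb (i := i)], hc, Or.inr ha⟩

theorem subset_or_subset_or_disjoint (hg : IsCRT g) (hb : IsEnum g b) (hij : i ≠ j) :
    Icc (aI g b j) (cI g b j) ⊆ Ioo (aI g b i) (cI g b i) ∨
      Icc (aI g b i) (cI g b i) ⊆ Ioo (aI g b j) (cI g b j) ∨
      Disjoint (Icc (aI g b i) (cI g b i)) (Icc (aI g b j) (cI g b j)) := by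
  by_cases hd : Disjoint (Icc (aI g b i) (cI g b i)) (Icc (aI g b j) (cI g b j))
  · exact Or.inr (Or.inr hd)
  obtain ⟨t, hti, htj⟩ := not_disjoint_iff.1 hd
  have Ei := isExcursionInterval_aI_cI hg hb i
  have Ej := isExcursionInterval_aI_cI hg hb j
  rcases lt_or_gt_of_ne ((hb.level_injective hg).ne hij) with hlt | hlt
  · exact Or.inl (Ei.subset_Ioo_of_lt Ej hlt hti htj)
  · exact Or.inr (Or.inl (Ej.subset_Ioo_of_lt Ei hlt htj hti))

-- The common ancestor is the (unique) minimum of `g` on the gap `[c_i, a_j]`.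
theorem exists_ancestor (hg : IsCRT g) (hb : IsEnum g b) (hij : cI g b i < aI g b j) :
    ∃ m, Icc (aI g b i) (cI g b i) ⊆ Ioo (aI g b m) (b m) ∧
      Icc (aI g b j) (cI g b j) ⊆ Ioo (b m) (cI g b m) := by
  have Ei := isExcursionInterval_aI_cI hg hb i
  have Ej := isExcursionInterval_aI_cI hg hb j
  have hK : Icc (cI g b i) (aI g b j) ⊆ Icc 0 1 := Icc_subset_Icc
    (by linarith [Ei.pos, Ei.lt_mid, Ei.mid_lt]) (by linarith [Ej.lt_mid, Ej.mid_lt, Ej.lt_one])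
  obtain ⟨t₀, ht₀, hmin⟩ :=
    isCompact_Icc.exists_isMinOn (nonempty_Icc.2 hij.le) (hg.cont.mono hK)
  have hgap := fun t ht (hmin : IsMinOn g _ t) =>
    Ei.isInnerLocalMin_of_isMinOn_gap hg Ej hij hmin ht
  obtain ⟨m, rfl⟩ :=
    (hb.2 t₀).1 (hg.isStrictLocalMin_of_isInnerLocalMin (hgap t₀ ht₀ hmin).2)
  have Em := isExcursionInterval_aI_cI hg hb m
  have hbm := (hgap _ ht₀ hmin).1
  have huniq : ∀ t ∈ Icc (cI g b i) (aI g b j), g t = g (b m) → t = b m := fun t ht hgt =>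
    hg.distinct t (b m) (hgap t ht fun z hz => hgt ▸ hmin hz).2 (hgap _ ht₀ hmin).2 hgt
  have ham : aI g b m < cI g b i := lt_of_not_ge fun h =>
    Em.lt_mid.ne (huniq _ ⟨h, Em.lt_mid.le.trans hbm.2.le⟩ Em.left_eq)
  have hcm : aI g b j < cI g b m := lt_of_not_ge fun h =>
    Em.mid_lt.ne' (huniq _ ⟨hbm.1.le.trans Em.mid_lt.le, h⟩ Em.right_eq)
  have hlti : g (b m) < g (b i) :=
    (le_of_le_of_eq (hmin ⟨le_rfl, hij.le⟩) Ei.right_eq).lt_of_ne fun h =>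
    hbm.1.ne (huniq _ ⟨le_rfl, hij.le⟩ (Ei.right_eq.trans h.symm))
  have hltj : g (b m) < g (b j) :=
    (le_of_le_of_eq (hmin ⟨hij.le, le_rfl⟩) Ej.left_eq).lt_of_ne fun h =>
    hbm.2.ne' (huniq _ ⟨hij.le, le_rfl⟩ (Ej.left_eq.trans h.symm))
  have hi := Em.subset_Ioo_of_lt Ei hlti ⟨ham.le, (hbm.1.trans Em.mid_lt).le⟩
    ⟨(Ei.lt_mid.trans Ei.mid_lt).le, le_rfl⟩
  have hj := Em.subset_Ioo_of_lt Ej hltj ⟨(Em.lt_mid.trans hbm.2).le, hcm.le⟩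
    ⟨le_rfl, (Ej.lt_mid.trans Ej.mid_lt).le⟩
  exact ⟨m, fun t ht => ⟨(hi ht).1, ht.2.trans_lt hbm.1⟩,
    fun t ht => ⟨hbm.2.trans_le ht.1, (hj ht).2⟩⟩

theorem exists_halves_of_disjoint (hg : IsCRT g) (hb : IsEnum g b)
    (h : Disjoint (Icc (aI g b i) (cI g b i)) (Icc (aI g b j) (cI g b j))) :
    ∃ m, (Icc (aI g b i) (cI g b i) ⊆ firstHalf g b s m ∧
        Icc (aI g b j) (cI g b j) ⊆ secondHalf g b s m) ∨
      (Icc (aI g b j) (cI g b j) ⊆ firstHalf g b s m ∧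
        Icc (aI g b i) (cI g b i) ⊆ secondHalf g b s m) := by
  have hord : cI g b i < aI g b j ∨ cI g b j < aI g b i := by
    by_contra! ⟨h₁, h₂⟩
    exact disjoint_left.1 h ⟨le_max_left _ _, max_le (aI_lt_cI hg hb i).le h₁⟩
      ⟨le_max_right _ _, max_le h₂ (aI_lt_cI hg hb j).le⟩
  rcases hord with hord | hord <;> obtain ⟨m, h₁, h₂⟩ := exists_ancestor hg hb hord <;>
    refine ⟨m, ?_⟩ <;> by_cases hs : s m = true <;> simp [firstHalf, secondHalf, hs, h₁, h₂]

theorem shuffled_le_of_disjoint (hg : IsCRT g) (hb : IsEnum g b)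
    (h : Disjoint (Icc (aI g b i) (cI g b i)) (Icc (aI g b j) (cI g b j))) :
    cI' g b s i ≤ aI' g b s j ∨ cI' g b s j ≤ aI' g b s i := by
  obtain ⟨m, ⟨h₁, h₂⟩ | ⟨h₁, h₂⟩⟩ := exists_halves_of_disjoint (s := s) hg hb h
  · exact Or.inl ((shuffled_le_of_subset_firstHalf hg hb h₁).2.trans
      (shuffled_le_of_subset_secondHalf hg hb h₂).1)
  · exact Or.inr ((shuffled_le_of_subset_firstHalf hg hb h₁).2.trans
      (shuffled_le_of_subset_secondHalf hg hb h₂).1)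

end Tree

section Strict

variable {g : ℝ → ℝ} {b : ℕ → ℝ} {s : ℕ → Bool} {i j l : ℕ}

theorem aI'_lt_cI' (hg : IsCRT g) (hb : IsEnum g b) : aI' g b s i < cI' g b s i :=
  (aI'_lt_bI' hg hb).trans (bI'_lt_cI' hg hb)

theorem shuffled_le_bI'_or_bI'_le (hg : IsCRT g) (hb : IsEnum g b) (hli : l ≠ i)
    (ha : aI' g b s i ≤ aI' g b s l) (hc : cI' g b s l ≤ cI' g b s i) :
    cI' g b s l ≤ bI' g b s i ∨ bI' g b s i ≤ aI' g b s l := by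
  have hl := aI'_lt_cI' (s := s) hg hb (i := l)
  rcases subset_or_subset_or_disjoint hg hb hli.symm with h | h | h
  · exact (shuffled_le_of_subset hg hb h).2.2
  · obtain ⟨ha', hc', -⟩ := shuffled_le_of_subset (s := s) hg hb h
    have hai := (h ⟨le_rfl, (aI_lt_cI hg hb i).le⟩).1
    have hci := (h ⟨(aI_lt_cI hg hb i).le, le_rfl⟩).2
    unfold cI' at hc hc'
    linarith
  · rcases shuffled_le_of_disjoint (s := s) hg hb h with h' | h' <;> linarith

theorem shuffled_lt_of_subset (hg : IsCRT g) (hb : IsEnum g b) (hA : PropA g b s)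
    (h : Icc (aI g b j) (cI g b j) ⊆ Ioo (aI g b i) (cI g b i)) :
    aI' g b s i < aI' g b s j ∧ cI' g b s j < cI' g b s i ∧
      (cI' g b s j < bI' g b s i ∨ bI' g b s i < aI' g b s j) := by
  have hlt :=
    (isExcursionInterval_aI_cI hg hb i).lt_of_subset (isExcursionInterval_aI_cI hg hb j) h
  obtain ⟨ha, hc, hside⟩ := shuffled_le_of_subset (s := s) hg hb h
  obtain ⟨H₁, H₂⟩ := hA i j (fun hij => hlt.ne (by rw [hij])) (Icc_subset_Icc ha hc)
  have hy : g (b j) ∈ Icc (g (b i)) (g (b j)) := ⟨hlt.le, le_rfl⟩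
  obtain ⟨l₁, ⟨hl₁, hjl₁⟩, hl₁i⟩ := exists_ne_of_mem_closure (H₁ _ hy) hlt.ne'
  obtain ⟨l₂, ⟨hl₂, hjl₂⟩, hl₂i⟩ := exists_ne_of_mem_closure (H₂ _ hy) hlt.ne'
  rw [Icc_subset_Icc_iff (aI'_lt_cI' hg hb).le] at hl₁ hl₂ hjl₁ hjl₂
  have hside₁ := shuffled_le_bI'_or_bI'_le hg hb hl₁i hl₁.1 hl₁.2
  have hside₂ := shuffled_le_bI'_or_bI'_le hg hb hl₂i hl₂.1 hl₂.2
  have hl₁ := aI'_lt_bI' (s := s) hg hb (i := l₁)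
  have hl₂ := bI'_lt_cI' (s := s) hg hb (i := l₂)
  have hj := aI'_lt_cI' (s := s) hg hb (i := j)
  refine ⟨by linarith, by linarith, ?_⟩
  rcases hside with hside | hside
  · left; rcases hside₂ with h₂ | h₂ <;> linarith
  · right; rcases hside₁ with h₁ | h₁ <;> linarith

theorem shuffled_subset_of_subset_firstHalf (hg : IsCRT g) (hb : IsEnum g b) (hA : PropA g b s)
    (h : Icc (aI g b j) (cI g b j) ⊆ firstHalf g b s i) :
    Icc (aI' g b s j) (cI' g b s j) ⊆ Ioo (aI' g b s i) (bI' g b s i) := by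
  obtain ⟨ha, -, hside⟩ := shuffled_lt_of_subset hg hb hA (h.trans (firstHalf_subset hg hb))
  have hc := (shuffled_le_of_subset_firstHalf hg hb h).2
  have hj := aI'_lt_cI' (s := s) hg hb (i := j)
  exact Icc_subset_Ioo ha (hside.resolve_right fun h' => by linarith)

theorem shuffled_subset_of_subset_secondHalf (hg : IsCRT g) (hb : IsEnum g b) (hA : PropA g b s)
    (h : Icc (aI g b j) (cI g b j) ⊆ secondHalf g b s i) :
    Icc (aI' g b s j) (cI' g b s j) ⊆ Ioo (bI' g b s i) (cI' g b s i) := by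
  obtain ⟨-, hc, hside⟩ := shuffled_lt_of_subset hg hb hA (h.trans (secondHalf_subset hg hb))
  have ha := (shuffled_le_of_subset_secondHalf hg hb h).1
  have hj := aI'_lt_cI' (s := s) hg hb (i := j)
  exact Icc_subset_Ioo (hside.resolve_left fun h' => by linarith) hc

theorem shuffled_disjoint_of_disjoint (hg : IsCRT g) (hb : IsEnum g b) (hA : PropA g b s)
    (h : Disjoint (Icc (aI g b i) (cI g b i)) (Icc (aI g b j) (cI g b j))) :
    Disjoint (Icc (aI' g b s i) (cI' g b s i)) (Icc (aI' g b s j) (cI' g b s j)) := by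
  have hIoo : ∀ x y z : ℝ, Disjoint (Ioo x y) (Ioo y z) := fun _ _ _ =>
    disjoint_left.2 fun _ h h' => lt_asymm h.2 h'.1
  obtain ⟨m, ⟨h₁, h₂⟩ | ⟨h₁, h₂⟩⟩ := exists_halves_of_disjoint (s := s) hg hb h
  · exact (hIoo _ _ _).mono (shuffled_subset_of_subset_firstHalf hg hb hA h₁)
      (shuffled_subset_of_subset_secondHalf hg hb hA h₂)
  · exact ((hIoo _ _ _).mono (shuffled_subset_of_subset_firstHalf hg hb hA h₁)
      (shuffled_subset_of_subset_secondHalf hg hb hA h₂)).symm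

end Strict

theorem stmt11_general (g : ℝ → ℝ) (hg : IsCRT g) (b : ℕ → ℝ) (hb : IsEnum g b) (s : ℕ → Bool)
    (hA : PropA g b s) (i j : ℕ) :
    (Set.Icc (aI g b j) (cI g b j) ⊆ Set.Ioo (aI g b i) (b i) →
      (s i = true → Set.Icc (aI' g b s j) (cI' g b s j) ⊆ Set.Ioo (aI' g b s i) (bI' g b s i)) ∧
      (s i = false → Set.Icc (aI' g b s j) (cI' g b s j) ⊆ Set.Ioo (bI' g b s i) (cI' g b s i))) ∧
    (Set.Icc (aI g b j) (cI g b j) ⊆ Set.Ioo (b i) (cI g b i) →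
      (s i = true → Set.Icc (aI' g b s j) (cI' g b s j) ⊆ Set.Ioo (bI' g b s i) (cI' g b s i)) ∧
      (s i = false → Set.Icc (aI' g b s j) (cI' g b s j) ⊆ Set.Ioo (aI' g b s i) (bI' g b s i))) ∧
    (Set.Icc (aI g b i) (cI g b i) ∩ Set.Icc (aI g b j) (cI g b j) = ∅ →
      Set.Icc (aI' g b s i) (cI' g b s i) ∩ Set.Icc (aI' g b s j) (cI' g b s j) = ∅) := by
  simp only [← disjoint_iff_inter_eq_empty]
  refine ⟨fun h => ⟨fun hs => ?_, fun hs => ?_⟩, fun h => ⟨fun hs => ?_, fun hs => ?_⟩,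
    shuffled_disjoint_of_disjoint hg hb hA⟩
  · exact shuffled_subset_of_subset_firstHalf hg hb hA (by simpa [firstHalf, hs] using h)
  · exact shuffled_subset_of_subset_secondHalf hg hb hA (by simpa [secondHalf, hs] using h)
  · exact shuffled_subset_of_subset_secondHalf hg hb hA (by simpa [secondHalf, hs] using h)
  · exact shuffled_subset_of_subset_firstHalf hg hb hA (by simpa [firstHalf, hs] using h)

/-- Under property (A), the nesting of shuffled intervals is strict. -/
theorem stmt11 (g : ℝ → ℝ) (hg : IsCRT g) (b : ℕ → ℝ) (hb : IsEnum g b) (s : ℕ → Bool)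
    (hA : PropA g b s) (i j : ℕ) (hij : i ≠ j) :
    (Set.Icc (aI g b j) (cI g b j) ⊆ Set.Ioo (aI g b i) (b i) →
      (s i = true → Set.Icc (aI' g b s j) (cI' g b s j) ⊆ Set.Ioo (aI' g b s i) (bI' g b s i)) ∧
      (s i = false → Set.Icc (aI' g b s j) (cI' g b s j) ⊆ Set.Ioo (bI' g b s i) (cI' g b s i))) ∧
    (Set.Icc (aI g b j) (cI g b j) ⊆ Set.Ioo (b i) (cI g b i) →
      (s i = true → Set.Icc (aI' g b s j) (cI' g b s j) ⊆ Set.Ioo (bI' g b s i) (cI' g b s i)) ∧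
      (s i = false → Set.Icc (aI' g b s j) (cI' g b s j) ⊆ Set.Ioo (aI' g b s i) (bI' g b s i))) ∧
    (Set.Icc (aI g b i) (cI g b i) ∩ Set.Icc (aI g b j) (cI g b j) = ∅ →
      Set.Icc (aI' g b s i) (cI' g b s i) ∩ Set.Icc (aI' g b s j) (cI' g b s j) = ∅) :=
  stmt11_general g hg b hb s hA i j
end
end

section
/- Every CRT excursion g can be recovered from its strict local minima: for all t ∈ [0,1], g(t) = sup_i h_i·1[t ∈ [a_i,c_i]], where the supremum is over all strict local minima b_i of g, h_i = g(b_i), a_i = sup{u<b_i : g(u)=h_i}, c_i = inf{u>b_i : g(u)=h_i}. -/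
open MeasureTheory Set

noncomputable section

lemma strict_of_inner {g : ℝ → ℝ} {β : ℝ}
    (hdis : ∀ b b', IsInnerLocalMin g b → IsInnerLocalMin g b' → g b = g b' → b = b')
    (h : IsInnerLocalMin g β) : IsStrictLocalMin g β := by
  obtain ⟨hβ, ε, hε, hmin⟩ := h
  obtain ⟨hβ0, hβ1⟩ := hβ
  set ε' := min ε (min β (1 - β)) with hε'def
  have hε'pos : 0 < ε' := lt_min hε (lt_min hβ0 (by linarith))
  have hε'ε : ε' ≤ ε := min_le_left _ _
  have hε'β : ε' ≤ β := le_trans (min_le_right _ _) (min_le_left _ _)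
  have hε'1 : ε' ≤ 1 - β := le_trans (min_le_right _ _) (min_le_right _ _)
  refine ⟨⟨hβ0, hβ1⟩, ε', hε'pos, ?_⟩
  intro x hx hne
  have hxε : x ∈ Set.Ioo (β - ε) (β + ε) :=
    ⟨by linarith [hx.1], by linarith [hx.2]⟩
  have hle : g β ≤ g x := hmin x hxε
  rcases hle.lt_or_eq with h | h
  · exact h
  · exfalso
    have habs : |x - β| < ε' := abs_lt.mpr ⟨by linarith [hx.1], by linarith [hx.2]⟩
    have hx0 : 0 < x := by linarith [hx.1]
    have hx1 : x < 1 := by linarith [hx.2]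
    have h3 := le_abs_self (x - β)
    have h4 := neg_abs_le (x - β)
    have hxinner : IsInnerLocalMin g x := by
      refine ⟨⟨hx0, hx1⟩, ε' - |x - β|, by linarith, ?_⟩
      intro y hy
      rw [← h]
      exact hmin y ⟨by linarith [hy.1], by linarith [hy.2]⟩
    exact hne (hdis x β hxinner ⟨⟨hβ0, hβ1⟩, ε, hε, hmin⟩ h.symm)

lemma key {g : ℝ → ℝ} (hg : IsCRT g) {β : ℝ} (h : IsStrictLocalMin g β) :
    0 < aPt g β ∧ aPt g β < β ∧ β < cPt g β ∧ cPt g β < 1 ∧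
      ∀ u ∈ Set.Icc (aPt g β) (cPt g β), g β ≤ g u := by
  obtain ⟨⟨hβ0, hβ1⟩, ε, hε, hstrict⟩ := h
  set ε₀ := min ε (min β (1 - β)) with hε₀def
  have hε₀pos : 0 < ε₀ := lt_min hε (lt_min hβ0 (by linarith))
  have hε₀ε : ε₀ ≤ ε := min_le_left _ _
  have hε₀β : ε₀ ≤ β := le_trans (min_le_right _ _) (min_le_left _ _)
  have hε₀1 : ε₀ ≤ 1 - β := le_trans (min_le_right _ _) (min_le_right _ _)
  have hstrict' : ∀ x, β - ε₀ < x → x < β + ε₀ → x ≠ β → g β < g x :=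
    fun x h1 h2 h3 => hstrict x ⟨by linarith, by linarith⟩ h3
  have hgβpos : 0 < g β := hg.pos β ⟨hβ0, hβ1⟩
  -- left auxiliary point u₀
  have hw : (0:ℝ) ≤ β - ε₀/2 := by linarith
  have hcont0 : ContinuousOn g (Icc 0 (β - ε₀/2)) :=
    hg.cont.mono (Icc_subset_Icc le_rfl (by linarith))
  have hgw : g β < g (β - ε₀/2) := hstrict' _ (by linarith) (by linarith) (by linarith)
  have hmemI : g β ∈ Icc (g 0) (g (β - ε₀/2)) := by
    rw [hg.zero0]; exact ⟨hgβpos.le, hgw.le⟩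
  obtain ⟨u₀, hu₀mem, hgu₀⟩ := intermediate_value_Icc hw hcont0 hmemI
  have hu₀pos : 0 < u₀ := by
    rcases hu₀mem.1.lt_or_eq with h | h
    · exact h
    · exfalso; rw [← h, hg.zero0] at hgu₀; linarith
  have hu₀β : u₀ < β := lt_of_le_of_lt hu₀mem.2 (by linarith)
  set A := {t : ℝ | t < β ∧ g t = g β} with hAdef
  have hu₀A : u₀ ∈ A := ⟨hu₀β, hgu₀⟩
  have hAle : ∀ x ∈ A, x ≤ β - ε₀ := by
    intro x hx
    by_contra hc; push_neg at hc
    exact absurd hx.2 (ne_of_gt (hstrict' x hc (by linarith [hx.1]) (ne_of_lt hx.1)))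
  have hu₀ε₀ : u₀ ≤ β - ε₀ := hAle u₀ hu₀A
  set A' := Icc u₀ (β - ε₀) ∩ g ⁻¹' {g β} with hA'def
  have hu₀A' : u₀ ∈ A' := ⟨⟨le_rfl, hu₀ε₀⟩, hgu₀⟩
  have hA'ne : A'.Nonempty := ⟨u₀, hu₀A'⟩
  have hA'closed : IsClosed A' :=
    (hg.cont.mono (Icc_subset_Icc hu₀pos.le (by linarith))).preimage_isClosed_of_isClosed
      isClosed_Icc isClosed_singleton
  have hA'bdd : BddAbove A' := ⟨β - ε₀, fun x hx => hx.1.2⟩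
  have hAbdd : BddAbove A := ⟨β, fun x hx => hx.1.le⟩
  have hA'sub : A' ⊆ A := fun x hx => ⟨by have := hx.1.2; linarith, hx.2⟩
  have hsupmem : sSup A' ∈ A' := hA'closed.csSup_mem hA'ne hA'bdd
  have hsup_eq : sSup A = sSup A' := by
    apply le_antisymm
    · apply Real.sSup_le
      · intro x hx
        rcases le_or_gt x u₀ with h | h
        · exact le_trans h (le_csSup hA'bdd hu₀A')
        · exact le_csSup hA'bdd ⟨⟨h.le, hAle x hx⟩, hx.2⟩
      · exact le_trans hu₀pos.le (le_csSup hA'bdd hu₀A')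
    · exact csSup_le_csSup hAbdd hA'ne hA'sub
  have haPt : aPt g β = sSup A := rfl
  have ha1 : u₀ ≤ aPt g β := by rw [haPt, hsup_eq]; exact hsupmem.1.1
  have ha2 : aPt g β ≤ β - ε₀ := by rw [haPt, hsup_eq]; exact hsupmem.1.2
  have hga : g (aPt g β) = g β := by rw [haPt, hsup_eq]; exact hsupmem.2
  have ha0 : 0 < aPt g β := lt_of_lt_of_le hu₀pos ha1
  have haβ : aPt g β < β := by linarith
  have haA : ∀ x ∈ A, x ≤ aPt g β := by
    intro x hx; rw [haPt]; exact le_csSup hAbdd hx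
  -- right auxiliary point u₁
  have hw1 : β + ε₀/2 ≤ 1 := by linarith
  have hcont1 : ContinuousOn g (Icc (β + ε₀/2) 1) :=
    hg.cont.mono (Icc_subset_Icc (by linarith) le_rfl)
  have hgw1 : g β < g (β + ε₀/2) := hstrict' _ (by linarith) (by linarith) (by linarith)
  have hmemI1 : g β ∈ Icc (g 1) (g (β + ε₀/2)) := by
    rw [hg.zero1]; exact ⟨hgβpos.le, hgw1.le⟩
  obtain ⟨u₁, hu₁mem, hgu₁⟩ := intermediate_value_Icc' hw1 hcont1 hmemI1
  have hu₁lt1 : u₁ < 1 := by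
    rcases hu₁mem.2.lt_or_eq with h | h
    · exact h
    · exfalso; rw [h, hg.zero1] at hgu₁; linarith
  have hu₁β : β < u₁ := lt_of_lt_of_le (by linarith) hu₁mem.1
  set C := {t : ℝ | β < t ∧ g t = g β} with hCdef
  have hu₁C : u₁ ∈ C := ⟨hu₁β, hgu₁⟩
  have hCge : ∀ x ∈ C, β + ε₀ ≤ x := by
    intro x hx
    by_contra hc; push_neg at hc
    exact absurd hx.2 (ne_of_gt (hstrict' x (by linarith [hx.1]) hc (ne_of_gt hx.1)))
  have hu₁ε₀ : β + ε₀ ≤ u₁ := hCge u₁ hu₁C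
  set C' := Icc (β + ε₀) u₁ ∩ g ⁻¹' {g β} with hC'def
  have hu₁C' : u₁ ∈ C' := ⟨⟨hu₁ε₀, le_rfl⟩, hgu₁⟩
  have hC'ne : C'.Nonempty := ⟨u₁, hu₁C'⟩
  have hC'closed : IsClosed C' :=
    (hg.cont.mono (Icc_subset_Icc (by linarith) hu₁lt1.le)).preimage_isClosed_of_isClosed
      isClosed_Icc isClosed_singleton
  have hC'bdd : BddBelow C' := ⟨β + ε₀, fun x hx => hx.1.1⟩
  have hCbdd : BddBelow C := ⟨β, fun x hx => hx.1.le⟩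
  have hC'sub : C' ⊆ C := fun x hx => ⟨by have := hx.1.1; linarith, hx.2⟩
  have hinfmem : sInf C' ∈ C' := hC'closed.csInf_mem hC'ne hC'bdd
  have hinf_eq : sInf C = sInf C' := by
    apply le_antisymm
    · exact csInf_le_csInf hCbdd hC'ne hC'sub
    · apply le_csInf ⟨u₁, hu₁C⟩
      intro x hx
      rcases le_or_gt x u₁ with h | h
      · exact csInf_le hC'bdd ⟨⟨hCge x hx, h⟩, hx.2⟩
      · exact le_trans (csInf_le hC'bdd hu₁C') h.le
  have hcPt : cPt g β = sInf C := rfl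
  have hc1 : β + ε₀ ≤ cPt g β := by rw [hcPt, hinf_eq]; exact hinfmem.1.1
  have hc2 : cPt g β ≤ u₁ := by rw [hcPt, hinf_eq]; exact hinfmem.1.2
  have hgc : g (cPt g β) = g β := by rw [hcPt, hinf_eq]; exact hinfmem.2
  have hcβ : β < cPt g β := by linarith
  have hc1' : cPt g β < 1 := lt_of_le_of_lt hc2 hu₁lt1
  have hcC : ∀ x ∈ C, cPt g β ≤ x := by
    intro x hx; rw [hcPt]; exact csInf_le hCbdd hx
  refine ⟨ha0, haβ, hcβ, hc1', ?_⟩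
  intro u hu
  rcases lt_trichotomy u β with hub | hub | hub
  · rcases eq_or_lt_of_le hu.1 with he | hlt
    · rw [← he, hga]
    · by_contra hcon; push_neg at hcon
      set w := (max u (β - ε₀) + β) / 2 with hwdef
      have hmaxβ : max u (β - ε₀) < β := max_lt hub (by linarith)
      have hw1' : β - ε₀ < w := by
        have := le_max_right u (β - ε₀); simp only [hwdef]; linarith
      have hw2' : w < β := by simp only [hwdef]; linarith
      have hw3' : u < w := by
        have := le_max_left u (β - ε₀); simp only [hwdef]; linarith
      have hgww : g β < g w := hstrict' w hw1' (by linarith) (ne_of_lt hw2')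
      have hcontuw : ContinuousOn g (Icc u w) :=
        hg.cont.mono (Icc_subset_Icc (by linarith) (by linarith))
      obtain ⟨v, hvmem, hgv⟩ := intermediate_value_Icc hw3'.le hcontuw ⟨hcon.le, hgww.le⟩
      have hvu : u < v := by
        rcases hvmem.1.lt_or_eq with h | h
        · exact h
        · exfalso; rw [← h] at hgv; linarith
      have hvA : v ∈ A := ⟨lt_of_le_of_lt hvmem.2 hw2', hgv⟩
      have := haA v hvA
      linarith
  · rw [hub]
  · rcases eq_or_lt_of_le hu.2 with he | hlt
    · rw [he, hgc]
    · by_contra hcon; push_neg at hcon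
      set w := (β + min u (β + ε₀)) / 2 with hwdef
      have hminβ : β < min u (β + ε₀) := lt_min hub (by linarith)
      have hw1' : β < w := by simp only [hwdef]; linarith
      have hw2' : w < β + ε₀ := by
        have := min_le_right u (β + ε₀); simp only [hwdef]; linarith
      have hw3' : w < u := by
        have := min_le_left u (β + ε₀); simp only [hwdef]; linarith
      have hgww : g β < g w := hstrict' w (by linarith) hw2' (ne_of_gt hw1')
      have hcontwu : ContinuousOn g (Icc w u) :=
        hg.cont.mono (Icc_subset_Icc (by linarith) (by linarith))
      obtain ⟨v, hvmem, hgv⟩ := intermediate_value_Icc' hw3'.le hcontwu ⟨hcon.le, hgww.le⟩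
      have hvu : v < u := by
        rcases hvmem.2.lt_or_eq with h | h
        · exact h
        · exfalso; rw [h] at hgv; linarith
      have hvC : v ∈ C := ⟨lt_of_lt_of_le hw1' hvmem.1, hgv⟩
      have := hcC v hvC
      linarith

/-- A CRT excursion is recovered from its strict local minima:
`g(t) = sup_i h_i · 1[t ∈ [a_i,c_i]]`. -/
theorem stmt14 (g : ℝ → ℝ) (hg : IsCRT g) (b : ℕ → ℝ) (hb : IsEnum g b) :
    ∀ t ∈ Set.Icc (0:ℝ) 1,
      g t = ⨆ i, Set.indicator (Set.Icc (aI g b i) (cI g b i)) (fun _ => g (b i)) t := by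
  intro t ht
  set F : ℕ → ℝ := fun i => Set.indicator (Set.Icc (aI g b i) (cI g b i)) (fun _ => g (b i)) t
    with hF
  have hstrictb : ∀ i, IsStrictLocalMin g (b i) := fun i => (hb.2 (b i)).mpr ⟨i, rfl⟩
  have hub : ∀ i, F i ≤ g t := by
    intro i
    simp only [hF]
    by_cases hmem : t ∈ Set.Icc (aI g b i) (cI g b i)
    · rw [Set.indicator_of_mem hmem]
      exact (key hg (hstrictb i)).2.2.2.2 t hmem
    · rw [Set.indicator_of_notMem hmem]
      exact hg.nonneg t ht
  have hbdd : BddAbove (Set.range F) := by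
    refine ⟨g t, ?_⟩
    rintro x ⟨i, rfl⟩
    exact hub i
  have hnn : ∀ i, 0 ≤ F i := by
    intro i
    simp only [hF]
    exact Set.indicator_nonneg (fun _ _ => (hg.pos (b i) (hstrictb i).1).le) t
  apply le_antisymm
  · -- g t ≤ iSup
    by_cases hto : t ∈ Set.Ioo (0:ℝ) 1
    · apply le_of_forall_lt
      intro h hh
      rcases lt_or_ge h 0 with hneg | hh0
      · exact lt_of_lt_of_le hneg (le_trans (hnn 0) (le_ciSup hbdd 0))
      -- main construction
      obtain ⟨ht0, ht1⟩ := hto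
      set S := Icc (0:ℝ) t ∩ g ⁻¹' (Iic h) with hSdef
      have hSne : S.Nonempty := ⟨0, ⟨le_rfl, ht0.le⟩, by
        simp only [mem_preimage, mem_Iic, hg.zero0]; exact hh0⟩
      have hScl : IsClosed S :=
        (hg.cont.mono (Icc_subset_Icc le_rfl ht1.le)).preimage_isClosed_of_isClosed
          isClosed_Icc isClosed_Iic
      have hSbdd : BddAbove S := ⟨t, fun x hx => hx.1.2⟩
      set α := sSup S with hαdef
      have hαmem : α ∈ S := hScl.csSup_mem hSne hSbdd
      have hα0 : 0 ≤ α := hαmem.1.1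
      have hαt : α ≤ t := hαmem.1.2
      have hgα : g α ≤ h := hαmem.2
      have hαltt : α < t := hαt.lt_of_ne (fun he => by rw [he] at hgα; linarith)
      have habove : ∀ u, α < u → u ≤ t → h < g u := by
        intro u h1 h2
        by_contra hc; push_neg at hc
        have hmem : u ∈ S := ⟨⟨by linarith, h2⟩, hc⟩
        have := le_csSup hSbdd hmem
        linarith
      have hα01 : α ∈ Icc (0:ℝ) 1 := ⟨hα0, by linarith⟩
      have hcα := hg.cont α hα01
      rw [Metric.continuousWithinAt_iff] at hcα
      obtain ⟨δ, hδpos, hδ⟩ := hcα (g t - g α) (by linarith)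
      set r := min (α + δ) t with hrdef
      have hrα : α < r := lt_min (by linarith) hαltt
      have hrt : r ≤ t := min_le_right _ _
      have hxmid : (α + r)/2 ∈ Icc (0:ℝ) 1 := ⟨by linarith, by linarith⟩
      have hclos := hg.dense_min _ hxmid
      rw [mem_closure_iff] at hclos
      obtain ⟨β₁, hβ₁I, hβ₁min⟩ := hclos (Ioo α r) isOpen_Ioo ⟨by linarith, by linarith⟩
      obtain ⟨hβ₁α, hβ₁r⟩ := hβ₁I
      have hβ₁01 : β₁ ∈ Set.Ioo (0:ℝ) 1 := hβ₁min.1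
      have hgβ₁ : g β₁ < g t := by
        have hd : dist β₁ α < δ := by
          rw [Real.dist_eq, abs_lt]
          constructor
          · have := min_le_left (α + δ) t; linarith
          · have := min_le_left (α + δ) t; linarith
        have := hδ ⟨hβ₁01.1.le, hβ₁01.2.le⟩ hd
        rw [Real.dist_eq] at this
        have := abs_lt.mp this
        linarith [this.2]
      have hβ₁t : β₁ < t := lt_of_lt_of_le hβ₁r hrt
      have hKcont : ContinuousOn g (Icc β₁ t) :=
        hg.cont.mono (Icc_subset_Icc hβ₁01.1.le ht1.le)
      obtain ⟨z, hz, hzmin⟩ := isCompact_Icc.exists_isMinOn ⟨β₁, le_rfl, hβ₁t.le⟩ hKcont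
      set m := g z with hmdef
      have hhm : h < m := habove z (lt_of_lt_of_le hβ₁α hz.1) hz.2
      have hmgβ₁ : m ≤ g β₁ := hzmin ⟨le_rfl, hβ₁t.le⟩
      have hmgt : m ≤ g t := hzmin ⟨hβ₁t.le, le_rfl⟩
      set D := Icc β₁ t ∩ g ⁻¹' {m} with hDdef
      have hDne : D.Nonempty := ⟨z, hz, rfl⟩
      have hDcl : IsClosed D :=
        hKcont.preimage_isClosed_of_isClosed isClosed_Icc isClosed_singleton
      have hDbdd : BddAbove D := ⟨t, fun x hx => hx.1.2⟩
      set β := sSup D with hβdef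
      have hβmem : β ∈ D := hDcl.csSup_mem hDne hDbdd
      have hgβm : g β = m := hβmem.2
      have hβge : β₁ ≤ β := hβmem.1.1
      have hβt : β < t := by
        rcases hβmem.1.2.lt_or_eq with h' | h'
        · exact h'
        · exfalso; rw [h'] at hgβm; linarith
      have hDle : ∀ x ∈ D, x ≤ β := fun x hx => le_csSup hDbdd hx
      have hgt_on : ∀ u, β < u → u ≤ t → m < g u := by
        intro u h1 h2
        have hge : m ≤ g u := hzmin ⟨le_trans hβge h1.le, h2⟩
        rcases hge.lt_or_eq with h' | h'
        · exact h'
        · exact absurd (hDle u ⟨⟨by linarith [hβge], h2⟩, h'.symm⟩) (not_le.mpr h1)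
      have hβI : IsInnerLocalMin g β := by
        rcases eq_or_lt_of_le hβge with he | hlt
        · rw [← he]; exact hβ₁min
        · refine ⟨⟨lt_of_lt_of_le hβ₁01.1 hβge, by linarith⟩,
            min (β - β₁) (t - β), lt_min (by linarith) (by linarith), ?_⟩
          intro x hx
          have hm1 := min_le_left (β - β₁) (t - β)
          have hm2 := min_le_right (β - β₁) (t - β)
          have hx1 : β₁ ≤ x := by linarith [hx.1]
          have hx2 : x ≤ t := by linarith [hx.2]
          have := hzmin ⟨hx1, hx2⟩
          rw [hgβm]
          exact this
      have hβS : IsStrictLocalMin g β := strict_of_inner hg.distinct hβI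
      obtain ⟨i, hi⟩ := (hb.2 β).mp hβS
      have hβ0 : 0 < β := lt_of_lt_of_le hβ₁01.1 hβge
      have haPtle : aPt g β ≤ t := by
        apply le_trans (Real.sSup_le (fun x hx => hx.1.le) hβ0.le) hβt.le
      -- cPt ≥ t
      have hmIcc : m ∈ Icc (g 1) (g t) := by rw [hg.zero1]; exact ⟨by linarith, hmgt⟩
      obtain ⟨u₂, hu₂mem, hgu₂⟩ := intermediate_value_Icc' ht1.le
        (hg.cont.mono (Icc_subset_Icc ht0.le le_rfl)) hmIcc
      have hCne : ({t' | β < t' ∧ g t' = g β} : Set ℝ).Nonempty :=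
        ⟨u₂, lt_of_lt_of_le hβt hu₂mem.1, by rw [hgβm]; exact hgu₂⟩
      have hcPtge : t ≤ cPt g β := by
        apply le_csInf hCne
        intro x hx
        by_contra hc; push_neg at hc
        have := hgt_on x hx.1 hc.le
        rw [hgβm] at hx
        linarith [hx.2, this]
      refine lt_of_lt_of_le ?_ (le_ciSup hbdd i)
      simp only [hF, aI, cI, hi]
      rw [Set.indicator_of_mem (show t ∈ Set.Icc (aPt g β) (cPt g β) from ⟨haPtle, hcPtge⟩), hgβm]
      exact hhm
    · -- t = 0 or t = 1
      have hgt0 : g t = 0 := by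
        rcases eq_or_lt_of_le ht.1 with h0 | h0
        · rw [← h0, hg.zero0]
        · rcases eq_or_lt_of_le ht.2 with h1 | h1
          · rw [h1, hg.zero1]
          · exact absurd ⟨h0, h1⟩ hto
      rw [hgt0]
      exact le_trans (hnn 0) (le_ciSup hbdd 0)
  · exact ciSup_le hub


end
end
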